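/- Validity of Rule A: let G be a connected signed graph with n ≥ 2 vertices and m edges, let v be a vertex of degree 1 in G, and let G' = G − v. Then for every integer k, β(G) ≥ m/2 + (n−1)/4 + k/4 if and only if β(G') ≥ (m−1)/2 + (n−2)/4 + (k−1)/4. -/

import Mathlib

open SimpleGraph

/-- A signed graph `(G, sign)` is balanced: there is a bipartition (given by `f`)
such that an edge is positive (`sign = true`) iff its endpoints lie in the same part. -/
def IsBalancedSigned {V : Type*} (G : SimpleGraph V) (sign : V → V → Bool) : Prop :=
  ∃ f : V → Bool, ∀ u v, G.Adj u v → sign u v = (f u == f v)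

/-- `beta G sign` : the maximum number of edges of a balanced subgraph of `G`
(subgraphs inherit the signs). -/
noncomputable def beta {V : Type*} (G : SimpleGraph V) (sign : V → V → Bool) : ℕ :=
  sSup {m | ∃ H : SimpleGraph V, H ≤ G ∧ IsBalancedSigned H sign ∧ H.edgeSet.ncard = m}

lemma edgeSet_map' {α β : Type*} (f : α ↪ β) (K : SimpleGraph α) :
    (K.map f).edgeSet = Sym2.map f '' K.edgeSet := by
  ext e
  refine Sym2.ind (fun a b => ?_) e
  simp only [mem_edgeSet, map_adj, Set.mem_image]
  constructor
  · rintro ⟨a', b', h, rfl, rfl⟩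
    exact ⟨s(a', b'), h, rfl⟩
  · rintro ⟨e', he, hmap⟩
    induction e' using Sym2.ind with
    | _ x y =>
      rw [Sym2.map_pair_eq] at hmap
      rcases Sym2.eq_iff.mp hmap with ⟨h1, h2⟩ | ⟨h1, h2⟩
      · exact ⟨x, y, he, h1, h2⟩
      · exact ⟨y, x, he.symm, h2, h1⟩

lemma beta_bddAbove {V : Type*} [Fintype V] (G : SimpleGraph V) (sign : V → V → Bool) :
    BddAbove {m | ∃ H : SimpleGraph V, H ≤ G ∧ IsBalancedSigned H sign ∧
      H.edgeSet.ncard = m} := by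
  refine ⟨G.edgeSet.ncard, ?_⟩
  rintro m ⟨H, hHG, -, rfl⟩
  exact Set.ncard_le_ncard (SimpleGraph.edgeSet_mono hHG) (Set.toFinite _)

lemma zero_mem_betaSet {V : Type*} (G : SimpleGraph V) (sign : V → V → Bool) :
    0 ∈ {m | ∃ H : SimpleGraph V, H ≤ G ∧ IsBalancedSigned H sign ∧
      H.edgeSet.ncard = m} :=
  ⟨⊥, bot_le, ⟨fun _ => true, fun u v h => absurd h (by simp)⟩, by simp⟩

lemma le_beta {V : Type*} [Fintype V] (G : SimpleGraph V) (sign : V → V → Bool)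
    {H : SimpleGraph V} (hHG : H ≤ G) (hb : IsBalancedSigned H sign) :
    H.edgeSet.ncard ≤ beta G sign :=
  le_csSup (beta_bddAbove G sign) ⟨H, hHG, hb, rfl⟩

lemma beta_spec {V : Type*} [Fintype V] (G : SimpleGraph V) (sign : V → V → Bool) :
    ∃ H : SimpleGraph V, H ≤ G ∧ IsBalancedSigned H sign ∧
      H.edgeSet.ncard = beta G sign :=
  Nat.sSup_mem ⟨0, zero_mem_betaSet G sign⟩ (beta_bddAbove G sign)

/-- validity of Rule A: for a connected signed graph `G` on `n ≥ 2`
vertices with `m` edges, a degree-1 vertex `v` and `G' = G - v`, for every integer `k`: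
`β(G) ≥ m/2 + (n-1)/4 + k/4` iff `β(G') ≥ (m-1)/2 + (n-2)/4 + (k-1)/4`. -/
theorem stmt9 {V : Type*} [Fintype V] (G : SimpleGraph V) (sign : V → V → Bool)
    (hsym : ∀ u v, sign u v = sign v u)
    (hconn : G.Connected) (h2 : 2 ≤ Fintype.card V)
    (v : V) (hdeg : (G.neighborSet v).ncard = 1)
    (k : ℤ) :
    ((G.edgeSet.ncard : ℚ) / 2 + ((Fintype.card V : ℚ) - 1) / 4 + (k : ℚ) / 4
        ≤ (beta G sign : ℚ)) ↔
      (((G.edgeSet.ncard : ℚ) - 1) / 2 + ((Fintype.card V : ℚ) - 2) / 4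
          + ((k : ℚ) - 1) / 4
        ≤ (beta (G.induce {v}ᶜ) (fun a b => sign a.val b.val) : ℚ)) := by
  classical
  obtain ⟨u, hu⟩ := Set.ncard_eq_one.mp hdeg
  have hadj : G.Adj v u := by
    have : u ∈ G.neighborSet v := by rw [hu]; exact rfl
    exact this
  have huv : u ≠ v := fun h => (G.loopless.irrefl v) (h ▸ hadj)
  have humem : u ∈ ({v}ᶜ : Set V) := huv
  set ι : ({v}ᶜ : Set V) ↪ V := Function.Embedding.subtype _ with hι
  set sign' : ({v}ᶜ : Set V) → ({v}ᶜ : Set V) → Bool :=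
    fun a b => sign a.val b.val with hsign'
  -- Every edge of `G` (hence of any subgraph) containing `v` is `s(v,u)`.
  have key : beta G sign = beta (G.induce {v}ᶜ) sign' + 1 := by
    apply le_antisymm
    · -- beta G ≤ beta G' + 1
      obtain ⟨H, hHG, ⟨f, hf⟩, hcard⟩ := beta_spec G sign
      set K : SimpleGraph ({v}ᶜ : Set V) := H.induce {v}ᶜ with hK
      have hKle : K ≤ G.induce {v}ᶜ := fun a b h => hHG h
      have hKbal : IsBalancedSigned K sign' :=
        ⟨fun a => f a.val, fun a b h => hf a.val b.val h⟩
      have hsub : H.edgeSet ⊆ (K.map ι).edgeSet ∪ {s(v, u)} := by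
        intro e he
        induction e using Sym2.ind with
        | _ a b =>
          rw [mem_edgeSet] at he
          by_cases hv : v ∈ s(a, b)
          · right
            rw [Sym2.mem_iff] at hv
            rw [Set.mem_singleton_iff]
            rcases hv with rfl | rfl
            · have hb : b ∈ G.neighborSet v := hHG he
              rw [hu, Set.mem_singleton_iff] at hb
              rw [hb]
            · have ha : a ∈ G.neighborSet v := (hHG he).symm
              rw [hu, Set.mem_singleton_iff] at ha
              rw [ha]
              exact Sym2.eq_swap
          · left
            rw [Sym2.mem_iff] at hv
            push_neg at hv
            obtain ⟨ha, hb⟩ := hv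
            rw [mem_edgeSet]
            exact ⟨he.ne, ⟨a, fun h => ha h.symm⟩, ⟨b, fun h => hb h.symm⟩, he, rfl, rfl⟩
      calc beta G sign = H.edgeSet.ncard := hcard.symm
        _ ≤ ((K.map ι).edgeSet ∪ {s(v, u)}).ncard :=
            Set.ncard_le_ncard hsub (Set.toFinite _)
        _ ≤ (K.map ι).edgeSet.ncard + ({s(v, u)} : Set (Sym2 V)).ncard :=
            Set.ncard_union_le _ _
        _ = K.edgeSet.ncard + 1 := by
            rw [edgeSet_map', Set.ncard_image_of_injective _
              (Sym2.map.injective ι.injective), Set.ncard_singleton]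
        _ ≤ beta (G.induce {v}ᶜ) sign' + 1 := by
            exact Nat.add_le_add_right (le_beta _ _ hKle hKbal) 1
    · -- beta G' + 1 ≤ beta G
      obtain ⟨K, hKle, ⟨f', hf'⟩, hcard⟩ := beta_spec (G.induce {v}ᶜ) sign'
      set H : SimpleGraph V := K.map ι ⊔ fromEdgeSet {s(u, v)} with hH
      have hHG : H ≤ G := by
        apply sup_le
        · rintro a b ⟨-, a', b', hab, rfl, rfl⟩
          exact hKle hab
        · intro a b hab
          rw [fromEdgeSet_adj, Set.mem_singleton_iff, Sym2.eq_iff] at hab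
          rcases hab.1 with ⟨rfl, rfl⟩ | ⟨rfl, rfl⟩
          · exact hadj.symm
          · exact hadj
      -- the balancing function
      set f : V → Bool := fun a =>
        if h : a = v then (if sign u v then f' ⟨u, humem⟩ else !(f' ⟨u, humem⟩))
        else f' ⟨a, h⟩ with hfdef
      have hfne : ∀ (a : V) (h : a ≠ v), f a = f' ⟨a, h⟩ := by
        intro a h; simp [hfdef, h]
      have hbal : IsBalancedSigned H sign := by
        refine ⟨f, fun a b hab => ?_⟩
        rcases hab with hab | hab
        · obtain ⟨-, a', b', hab', rfl, rfl⟩ := hab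
          show sign a'.val b'.val = (f a'.val == f b'.val)
          rw [hfne _ a'.2, hfne _ b'.2]
          have := hf' a' b' hab'
          simpa using this
        · rw [fromEdgeSet_adj, Set.mem_singleton_iff, Sym2.eq_iff] at hab
          have hfv : f v = (if sign u v then f' ⟨u, humem⟩ else !(f' ⟨u, humem⟩)) := by
            simp [hfdef]
          rcases hab.1 with ⟨rfl, rfl⟩ | ⟨rfl, rfl⟩
          · rw [hfne a huv, hfv]
            cases hsuv : sign a b <;> simp [hsuv] <;> cases f' ⟨a, humem⟩ <;> simp
          · rw [hfne b huv, hfv, hsym a b]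
            cases hsuv : sign b a <;> simp [hsuv] <;> cases f' ⟨b, humem⟩ <;> simp
      have hEdge : H.edgeSet = (K.map ι).edgeSet ∪ {s(u, v)} := by
        rw [hH, edgeSet_sup, edgeSet_fromEdgeSet]
        congr 1
        ext e
        simp only [Set.mem_diff, Set.mem_singleton_iff, Set.mem_setOf_eq]
        constructor
        · rintro ⟨h, -⟩; exact h
        · rintro rfl
          exact ⟨rfl, fun hd => huv (Sym2.mk_isDiag_iff.mp hd)⟩
      have hnotmem : s(u, v) ∉ (K.map ι).edgeSet := by
        rw [edgeSet_map']
        rintro ⟨e, -, he⟩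
        have : v ∈ Sym2.map ι e := he ▸ Sym2.mem_mk_right u v
        obtain ⟨x, -, hx⟩ := Sym2.mem_map.mp this
        exact x.2 hx
      have hcount : H.edgeSet.ncard = K.edgeSet.ncard + 1 := by
        rw [hEdge, Set.union_singleton, Set.ncard_insert_of_notMem hnotmem
          (Set.toFinite _), edgeSet_map', Set.ncard_image_of_injective _
          (Sym2.map.injective ι.injective)]
      have := le_beta G sign hHG hbal
      rw [hcount, hcard] at this
      exact this
  have hq : (beta G sign : ℚ) = (beta (G.induce {v}ᶜ) sign' : ℚ) + 1 := by
    rw [key]; push_cast; ring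
  rw [hq]
  constructor <;> intro h <;> linarith
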